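/- Let α and β be propositional formulas such that every propositional variable occurring in β also occurs in α. Then the restricted disjunction-introduction formula α → (α ∨ β) is valid in the matrix M_D. -/
import Mathlib


inductive PropForm where
  | var : Nat → PropForm
  | neg : PropForm → PropForm
  | imp : PropForm → PropForm → PropForm
  | or  : PropForm → PropForm → PropForm
  | and : PropForm → PropForm → PropForm
  | iff : PropForm → PropForm → PropForm

def fimp : Fin 3 → Fin 3 → Fin 3
  | 0, _ => 1
  | 1, 0 => 0 | 1, 1 => 1 | 1, 2 => 0
  | 2, 0 => 0 | 2, 1 => 1 | 2, 2 => 2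

def fneg : Fin 3 → Fin 3
  | 0 => 1 | 1 => 0 | 2 => 2

def fdisj : Fin 3 → Fin 3 → Fin 3
  | 0, 0 => 0 | 0, 1 => 1 | 0, 2 => 0
  | 1, _ => 1
  | 2, 0 => 0 | 2, 1 => 1 | 2, 2 => 2

def fconj : Fin 3 → Fin 3 → Fin 3
  | 0, _ => 0
  | 1, 0 => 0 | 1, 1 => 1 | 1, 2 => 1
  | 2, 0 => 0 | 2, 1 => 1 | 2, 2 => 2

def fequiv : Fin 3 → Fin 3 → Fin 3
  | 0, 0 => 1 | 1, 1 => 1 | 2, 2 => 2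
  | _, _ => 0

def evalMD (v : Nat → Fin 3) : PropForm → Fin 3
  | .var n => v n
  | .neg φ => fneg (evalMD v φ)
  | .imp φ ψ => fimp (evalMD v φ) (evalMD v ψ)
  | .or φ ψ => fdisj (evalMD v φ) (evalMD v ψ)
  | .and φ ψ => fconj (evalMD v φ) (evalMD v ψ)
  | .iff φ ψ => fequiv (evalMD v φ) (evalMD v ψ)

def varsOf : PropForm → Set Nat
  | .var n => {n}
  | .neg φ => varsOf φ
  | .imp φ ψ => varsOf φ ∪ varsOf ψ
  | .or φ ψ => varsOf φ ∪ varsOf ψ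
  | .and φ ψ => varsOf φ ∪ varsOf ψ
  | .iff φ ψ => varsOf φ ∪ varsOf ψ

def Desig (a : Fin 3) : Prop := a = 1 ∨ a = 2

def ValidMD (φ : PropForm) : Prop := ∀ v : Nat → Fin 3, Desig (evalMD v φ)

def evalBool (w : Nat → Bool) : PropForm → Bool
  | .var n => w n
  | .neg φ => !(evalBool w φ)
  | .imp φ ψ => !(evalBool w φ) || evalBool w ψ
  | .or φ ψ => evalBool w φ || evalBool w ψ
  | .and φ ψ => evalBool w φ && evalBool w ψ
  | .iff φ ψ => evalBool w φ == evalBool w ψ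

def ClassicalTaut (φ : PropForm) : Prop := ∀ w : Nat → Bool, evalBool w φ = true

lemma eval_two_vars (v : Nat → Fin 3) (φ : PropForm) (h : evalMD v φ = 2) :
    ∀ n ∈ varsOf φ, v n = 2 := by
  induction φ with
  | var m =>
      intro n hn
      simp [varsOf] at hn
      subst hn
      simpa [evalMD] using h
  | neg φ ih =>
      intro n hn
      apply ih _ n hn
      simp [evalMD] at h
      revert h
      match evalMD v φ with
      | 0 => simp [fneg]
      | 1 => simp [fneg]
      | 2 => simp
  | imp φ ψ ih1 ih2 =>
      intro n hn
      simp [evalMD] at h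
      have : evalMD v φ = 2 ∧ evalMD v ψ = 2 := by
        revert h
        match evalMD v φ, evalMD v ψ with
        | 0, x => simp [fimp]
        | 1, 0 => simp [fimp]
        | 1, 1 => simp [fimp]
        | 1, 2 => simp [fimp]
        | 2, 0 => simp [fimp]
        | 2, 1 => simp [fimp]
        | 2, 2 => simp [fimp]
      rcases hn with hn | hn
      · exact ih1 this.1 n hn
      · exact ih2 this.2 n hn
  | or φ ψ ih1 ih2 =>
      intro n hn
      simp [evalMD] at h
      have : evalMD v φ = 2 ∧ evalMD v ψ = 2 := by
        revert h
        match evalMD v φ, evalMD v ψ with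
        | 0, 0 => simp [fdisj]
        | 0, 1 => simp [fdisj]
        | 0, 2 => simp [fdisj]
        | 1, x => simp [fdisj]
        | 2, 0 => simp [fdisj]
        | 2, 1 => simp [fdisj]
        | 2, 2 => simp [fdisj]
      rcases hn with hn | hn
      · exact ih1 this.1 n hn
      · exact ih2 this.2 n hn
  | and φ ψ ih1 ih2 =>
      intro n hn
      simp [evalMD] at h
      have : evalMD v φ = 2 ∧ evalMD v ψ = 2 := by
        revert h
        match evalMD v φ, evalMD v ψ with
        | 0, x => simp [fconj]
        | 1, 0 => simp [fconj]
        | 1, 1 => simp [fconj]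
        | 1, 2 => simp [fconj]
        | 2, 0 => simp [fconj]
        | 2, 1 => simp [fconj]
        | 2, 2 => simp [fconj]
      rcases hn with hn | hn
      · exact ih1 this.1 n hn
      · exact ih2 this.2 n hn
  | iff φ ψ ih1 ih2 =>
      intro n hn
      simp [evalMD] at h
      have : evalMD v φ = 2 ∧ evalMD v ψ = 2 := by
        revert h
        match evalMD v φ, evalMD v ψ with
        | 0, 0 => simp [fequiv]
        | 0, 1 => simp [fequiv]
        | 0, 2 => simp [fequiv]
        | 1, 0 => simp [fequiv]
        | 1, 1 => simp [fequiv]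
        | 1, 2 => simp [fequiv]
        | 2, 0 => simp [fequiv]
        | 2, 1 => simp [fequiv]
        | 2, 2 => simp [fequiv]
      rcases hn with hn | hn
      · exact ih1 this.1 n hn
      · exact ih2 this.2 n hn

lemma vars_two_eval (v : Nat → Fin 3) (φ : PropForm) (h : ∀ n ∈ varsOf φ, v n = 2) :
    evalMD v φ = 2 := by
  induction φ with
  | var m => simp [evalMD, h m (by simp [varsOf])]
  | neg φ ih =>
      simp [evalMD, ih (fun n hn => h n hn), fneg]
  | imp φ ψ ih1 ih2 =>
      have h1 := ih1 (fun n hn => h n (Or.inl hn))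
      have h2 := ih2 (fun n hn => h n (Or.inr hn))
      simp [evalMD, h1, h2, fimp]
  | or φ ψ ih1 ih2 =>
      have h1 := ih1 (fun n hn => h n (Or.inl hn))
      have h2 := ih2 (fun n hn => h n (Or.inr hn))
      simp [evalMD, h1, h2, fdisj]
  | and φ ψ ih1 ih2 =>
      have h1 := ih1 (fun n hn => h n (Or.inl hn))
      have h2 := ih2 (fun n hn => h n (Or.inr hn))
      simp [evalMD, h1, h2, fconj]
  | iff φ ψ ih1 ih2 =>
      have h1 := ih1 (fun n hn => h n (Or.inl hn))
      have h2 := ih2 (fun n hn => h n (Or.inr hn))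
      simp [evalMD, h1, h2, fequiv]

theorem stmt15 (α β : PropForm) (h : varsOf β ⊆ varsOf α) :
    ValidMD (PropForm.imp α (PropForm.or α β)) := by
  intro v
  simp only [evalMD]
  match ha : evalMD v α with
  | 0 => left; simp [fimp]
  | 1 =>
      left
      match evalMD v β with
      | 0 => simp [fdisj, fimp]
      | 1 => simp [fdisj, fimp]
      | 2 => simp [fdisj, fimp]
  | 2 =>
      have hvars := eval_two_vars v α ha
      have hb : evalMD v β = 2 := vars_two_eval v β (fun n hn => hvars n (h hn))
      right
      simp [hb, fdisj, fimp]
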